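/- arXiv:1402.1717 — 2 statements merged into one kernel-verified Lean document; each statement's English description precedes it below -/
import Mathlib

section
/- For every s ∈ ℂ, on (𝔳 × 𝔷) ∖ {(0,0)} one has Δ₂ K_s = ( 4s p₂ |X|² + 8s(2s+q−1) |X₂|² ) K_{s−1}. -/
open scoped InnerProductSpace

noncomputable section

/-- The left-invariant vector field on `N = 𝔳 × 𝔷` associated to `S ∈ 𝔳`:
`(Sf)(X,Z) = ∂_𝔳 f(X,Z)[S] - ½ ∂_𝔷 f(X,Z)[[S,X]]`. -/
def vfV {V W : Type*} [NormedAddCommGroup V] [InnerProductSpace ℝ V]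
    [NormedAddCommGroup W] [InnerProductSpace ℝ W]
    (br : V →ₗ[ℝ] V →ₗ[ℝ] W) (S : V) (f : V × W → ℂ) : V × W → ℂ :=
  fun x => fderiv ℝ f x (S, 0) - (1/2 : ℂ) * fderiv ℝ f x (0, br S x.1)

/-- The left-invariant vector field associated to `T ∈ 𝔷`: `(Tf)(X,Z) = ∂_𝔷 f(X,Z)[T]`. -/
def vfW {V W : Type*} [NormedAddCommGroup V] [InnerProductSpace ℝ V]
    [NormedAddCommGroup W] [InnerProductSpace ℝ W]
    (T : W) (f : V × W → ℂ) : V × W → ℂ :=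
  fun x => fderiv ℝ f x (0, T)

/-- Sub-Laplacian `∑_{j ∈ fs} S_j²` associated to a family of vectors in `𝔳`. -/
def subLap {V W : Type*} [NormedAddCommGroup V] [InnerProductSpace ℝ V]
    [NormedAddCommGroup W] [InnerProductSpace ℝ W] {ι : Type*}
    (br : V →ₗ[ℝ] V →ₗ[ℝ] W) (fs : Finset ι) (S : ι → V) (f : V × W → ℂ) : V × W → ℂ :=
  fun x => ∑ j ∈ fs, vfV br (S j) (vfV br (S j) f) x

/-- Central Laplacian `∑_{j ∈ fs} T_j²` associated to a family of vectors in `𝔷`. -/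
def boxLap {V W : Type*} [NormedAddCommGroup V] [InnerProductSpace ℝ V]
    [NormedAddCommGroup W] [InnerProductSpace ℝ W] {ι : Type*}
    (fs : Finset ι) (T : ι → W) (f : V × W → ℂ) : V × W → ℂ :=
  fun x => ∑ j ∈ fs, vfW (T j) (vfW (T j) f) x

/-- The norm function `K(X,Z) = |X|⁴ + |Z|²`. -/
def Kfun {V W : Type*} [NormedAddCommGroup V] [NormedAddCommGroup W] (x : V × W) : ℝ :=
  ‖x.1‖^4 + ‖x.2‖^2

/-- The complex power `K_s = K^s`. -/
def Ks {V W : Type*} [NormedAddCommGroup V] [NormedAddCommGroup W] (s : ℂ) (x : V × W) : ℂ :=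
  (Kfun x : ℂ) ^ s

/-- `ρ = (p+2q)/2` as a complex number. -/
def rhoC (p q : ℕ) : ℂ := ((p : ℂ) + 2*q)/2

/-- `B(s) = 4s(4s+2ρ-2)`. -/
def Bc (p q : ℕ) (s : ℂ) : ℂ := 4*s*(4*s + 2*(rhoC p q) - 2)

/-- The component `X₂` of `X ∈ 𝔳` in `𝔳₂ = 𝔳₁ᗮ`. -/
def projPerp {V : Type*} [NormedAddCommGroup V] [InnerProductSpace ℝ V]
    [FiniteDimensional ℝ V] (V₁ : Submodule ℝ V) (X : V) : V :=
  (Submodule.orthogonalProjectionOnto V₁ᗮ X : V)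

/-!
Write `L_S(X,Z) = 4|X|²⟨X,S⟩ - ⟨Z,[S,X]⟩` (`derivKfun`). As a vector field on `𝔳 × 𝔷`, `S` is
`(X,Z) ↦ (S, -½[S,X])`, so `S K = L_S`, and the chain and product rules give
`S² K_s = s(s-1) K_{s-2} L_S² + s K_{s-1} S L_S` with `S L_S = 8⟨X,S⟩² + 4|X|²|S|² + ½|[S,X]|²`.
For `S ∈ 𝔳₂`, `[𝔳₁,𝔳₂] = 0` gives `L_S = ⟨4|X|² X₂ + J_Z X₂, S⟩`, and `J_Z` preserves `𝔳₂`.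
Summing over the basis vectors in `𝔳₂` is then Parseval in `𝔳₂`, and the H-type identity
`|a Y + J_Z Y|² = (a² + 16|Z|²)|Y|²` yields `∑ L_S² = 16|X₂|² K`, `∑ |[S,X]|² = 16q|X₂|²` and
`∑ ⟨X,S⟩² = |X₂|²`.
-/

section LeftInvariantField

variable {V W : Type*} [NormedAddCommGroup V] [InnerProductSpace ℝ V]
  [NormedAddCommGroup W] [InnerProductSpace ℝ W] (br : V →ₗ[ℝ] V →ₗ[ℝ] W)

def leftInvField (S : V) (x : V × W) : V × W := (S, -(2⁻¹ : ℝ) • br S x.1)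

theorem vfV_eq_fderiv (S : V) (f : V × W → ℂ) (x : V × W) :
    vfV br S f x = fderiv ℝ f x (leftInvField br S x) := by
  have hsplit : leftInvField br S x = (S, 0) + (-(2⁻¹ : ℝ)) • ((0 : V), br S x.1) := by
    simp [leftInvField]
  rw [vfV, hsplit, map_add, map_smul, Complex.real_smul]
  push_cast
  ring

theorem HasFDerivAt.vfV_eq {S : V} {f : V × W → ℂ} {f' : V × W →L[ℝ] ℂ} {x : V × W}
    (hf : HasFDerivAt f f' x) : vfV br S f x = f' (leftInvField br S x) := by
  rw [vfV_eq_fderiv, hf.fderiv]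

theorem vfV_congr_of_eventuallyEq {S : V} {f g : V × W → ℂ} {x : V × W} (h : f =ᶠ[nhds x] g) :
    vfV br S f x = vfV br S g x := by
  rw [vfV_eq_fderiv, vfV_eq_fderiv, h.fderiv_eq]

end LeftInvariantField

theorem HasFDerivAt.ofReal_cpow {E : Type*} [NormedAddCommGroup E] [NormedSpace ℝ E]
    {f : E → ℝ} {f' : E →L[ℝ] ℝ} {x : E} (hf : HasFDerivAt f f' x) (hpos : 0 < f x) (s : ℂ) :
    HasFDerivAt (fun y => (f y : ℂ) ^ s)
      ((s * (f x : ℂ) ^ (s - 1)) • Complex.ofRealCLM.comp f') x := by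
  have hcpow : HasDerivAt (fun z : ℂ => z ^ s) (s * (f x : ℂ) ^ (s - 1)) (f x) :=
    (Complex.hasStrictDerivAt_cpow_const (Complex.ofReal_mem_slitPlane.2 hpos)).hasDerivAt
  exact hcpow.comp_hasFDerivAt x (Complex.ofRealCLM.hasFDerivAt.comp x hf)

section NormFunction

variable {V W : Type*} [NormedAddCommGroup V] [NormedAddCommGroup W]

theorem Kfun_pos {x : V × W} (hx : x ≠ 0) : 0 < Kfun x := by
  rcases eq_or_ne x.1 0 with h1 | h1
  · have h2 : x.2 ≠ 0 := fun h2 => hx (Prod.ext h1 h2)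
    have := norm_pos_iff.2 h2
    unfold Kfun; positivity
  · have := norm_pos_iff.2 h1
    unfold Kfun; positivity

theorem Kfun_eq_add : (Kfun : V × W → ℝ) = (fun y => (‖y.1‖ ^ 2) ^ 2) + fun y => ‖y.2‖ ^ 2 := by
  funext y
  simp only [Kfun, Pi.add_apply]
  ring

variable [InnerProductSpace ℝ V] [InnerProductSpace ℝ W]

theorem differentiableAt_Kfun (x : V × W) : DifferentiableAt ℝ Kfun x := by
  rw [Kfun_eq_add]
  exact ((hasFDerivAt_fst.norm_sq.pow 2).add hasFDerivAt_snd.norm_sq).differentiableAt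

theorem fderiv_Kfun_apply (x v : V × W) :
    fderiv ℝ Kfun x v = 4 * ‖x.1‖ ^ 2 * ⟪x.1, v.1⟫_ℝ + 2 * ⟪x.2, v.2⟫_ℝ := by
  rw [Kfun_eq_add, ((hasFDerivAt_fst.norm_sq.pow 2).add hasFDerivAt_snd.norm_sq).fderiv]
  simp only [Nat.add_one_sub_one, pow_one, nsmul_eq_mul, Nat.cast_ofNat,
    add_apply, smul_apply, ContinuousLinearMap.comp_apply,
    ContinuousLinearMap.coe_fst', ContinuousLinearMap.coe_snd', coe_innerSL_apply, smul_eq_mul]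
  ring

theorem hasFDerivAt_Ks {x : V × W} (hx : x ≠ 0) (s : ℂ) :
    HasFDerivAt (Ks s) ((s * Ks (s - 1) x) • Complex.ofRealCLM.comp (fderiv ℝ Kfun x)) x :=
  (differentiableAt_Kfun x).hasFDerivAt.ofReal_cpow (Kfun_pos hx) s

end NormFunction

section Derivatives

variable {V W : Type*} [NormedAddCommGroup V] [InnerProductSpace ℝ V]
  [NormedAddCommGroup W] [InnerProductSpace ℝ W] (br : V →ₗ[ℝ] V →ₗ[ℝ] W) (S : V)

def derivKfun (x : V × W) : ℝ := 4 * ‖x.1‖ ^ 2 * ⟪x.1, S⟫_ℝ - ⟪x.2, br S x.1⟫_ℝ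

theorem fderiv_Kfun_leftInvField (x : V × W) :
    fderiv ℝ Kfun x (leftInvField br S x) = derivKfun br S x := by
  simp only [fderiv_Kfun_apply, leftInvField, derivKfun, inner_smul_right]
  ring

theorem vfV_Ks {x : V × W} (hx : x ≠ 0) (s : ℂ) :
    vfV br S (Ks s) x = s * Ks (s - 1) x * derivKfun br S x := by
  rw [(hasFDerivAt_Ks hx s).vfV_eq]
  simp only [smul_apply, ContinuousLinearMap.comp_apply,
    Complex.ofRealCLM_apply, fderiv_Kfun_leftInvField, smul_eq_mul, mul_assoc]

variable [FiniteDimensional ℝ V]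

theorem differentiableAt_derivKfun (x : V × W) : DifferentiableAt ℝ (derivKfun br S) x :=
  (((differentiableAt_fst.norm_sq ℝ).const_mul 4).mul
    (differentiableAt_fst.inner ℝ (differentiableAt_const S))).sub
    (differentiableAt_snd.inner ℝ ((br S).toContinuousLinearMap.differentiableAt.comp x
      differentiableAt_fst))

theorem fderiv_derivKfun_leftInvField (hS : br S S = 0) (x : V × W) :
    fderiv ℝ (derivKfun br S) x (leftInvField br S x)
      = 8 * ⟪x.1, S⟫_ℝ ^ 2 + 4 * ‖x.1‖ ^ 2 * ‖S‖ ^ 2 + 2⁻¹ * ‖br S x.1‖ ^ 2 := by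
  have h : HasFDerivAt (derivKfun br S) _ x :=
    ((hasFDerivAt_fst.norm_sq.const_mul 4).mul
      (hasFDerivAt_fst.inner ℝ (hasFDerivAt_const S x))).sub
      (hasFDerivAt_snd.inner ℝ ((br S).toContinuousLinearMap.hasFDerivAt.comp x hasFDerivAt_fst))
  rw [h.fderiv]
  simp only [leftInvField, sub_apply, add_apply,
    smul_apply, ContinuousLinearMap.comp_apply, ContinuousLinearMap.prod_apply,
    ContinuousLinearMap.coe_fst', ContinuousLinearMap.coe_snd', zero_apply,
    LinearMap.coe_toContinuousLinearMap', fderivInnerCLM_apply, coe_innerSL_apply, hS,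
    inner_zero_right, real_inner_self_eq_norm_sq, inner_smul_left,
    Real.ringHom_apply, nsmul_eq_mul, Nat.cast_ofNat, smul_eq_mul]
  ring

theorem vfV_vfV_Ks (hS : br S S = 0) {x : V × W} (hx : x ≠ 0) (s : ℂ) :
    vfV br S (vfV br S (Ks s)) x
      = s * (s - 1) * Ks (s - 2) x * (derivKfun br S x : ℂ) ^ 2
        + s * Ks (s - 1) x
          * ((8 * ⟪x.1, S⟫_ℝ ^ 2 + 4 * ‖x.1‖ ^ 2 * ‖S‖ ^ 2 + 2⁻¹ * ‖br S x.1‖ ^ 2 : ℝ) : ℂ) := by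
  have hnear : vfV br S (Ks s) =ᶠ[nhds x] fun y => s * Ks (s - 1) y * derivKfun br S y :=
    (eventually_ne_nhds hx).mono fun y hy => vfV_Ks br S hy s
  have hK := hasFDerivAt_Ks hx (s - 1)
  have hL : HasFDerivAt (fun y => (derivKfun br S y : ℂ))
      (Complex.ofRealCLM.comp (fderiv ℝ (derivKfun br S) x)) x :=
    Complex.ofRealCLM.hasFDerivAt.comp x (differentiableAt_derivKfun br S x).hasFDerivAt
  rw [vfV_congr_of_eventuallyEq br hnear, ((hK.const_mul s).fun_mul hL).vfV_eq]
  simp only [add_apply, smul_apply,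
    ContinuousLinearMap.comp_apply, Complex.ofRealCLM_apply, fderiv_Kfun_leftInvField,
    fderiv_derivKfun_leftInvField br S hS, smul_eq_mul]
  rw [sub_sub, one_add_one_eq_two]
  push_cast
  ring

end Derivatives

theorem subLap_Ks {V W : Type*} [NormedAddCommGroup V] [InnerProductSpace ℝ V]
    [NormedAddCommGroup W] [InnerProductSpace ℝ W] [FiniteDimensional ℝ V]
    {br : V →ₗ[ℝ] V →ₗ[ℝ] W} (hbr : br.IsAlt) {ι : Type*} (A : Finset ι) (S : ι → V)
    {x : V × W} (hx : x ≠ 0) (s : ℂ) :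
    subLap br A S (Ks s) x
      = s * (s - 1) * Ks (s - 2) x * ((∑ j ∈ A, derivKfun br (S j) x ^ 2 : ℝ) : ℂ)
        + s * Ks (s - 1) x * ((∑ j ∈ A, (8 * ⟪x.1, S j⟫_ℝ ^ 2 + 4 * ‖x.1‖ ^ 2 * ‖S j‖ ^ 2
            + 2⁻¹ * ‖br (S j) x.1‖ ^ 2) : ℝ) : ℂ) := by
  simp only [subLap, vfV_vfV_Ks br _ (hbr _) hx]
  push_cast
  rw [Finset.mul_sum, Finset.mul_sum, ← Finset.sum_add_distrib]

section HType

variable {V W : Type*} [NormedAddCommGroup V] [InnerProductSpace ℝ V]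
  [NormedAddCommGroup W] [InnerProductSpace ℝ W]
  {br : V →ₗ[ℝ] V →ₗ[ℝ] W} {J : W →ₗ[ℝ] V →ₗ[ℝ] V}

theorem inner_J_apply_comm (hbr : br.IsAlt) (hJ : ∀ z X Y, ⟪J z X, Y⟫_ℝ = ⟪z, br X Y⟫_ℝ)
    (z : W) (X Y : V) : ⟪J z X, Y⟫_ℝ = -⟪J z Y, X⟫_ℝ := by
  rw [hJ, hJ, ← hbr.neg Y X, inner_neg_right]

theorem inner_J_apply_self (hbr : br.IsAlt) (hJ : ∀ z X Y, ⟪J z X, Y⟫_ℝ = ⟪z, br X Y⟫_ℝ)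
    (z : W) (X : V) : ⟪J z X, X⟫_ℝ = 0 := by
  rw [hJ, hbr.self_eq_zero, inner_zero_right]

theorem inner_J_J (hbr : br.IsAlt) (hJ : ∀ z X Y, ⟪J z X, Y⟫_ℝ = ⟪z, br X Y⟫_ℝ)
    (hH : ∀ z X, J z (J z X) = (-16 * ‖z‖ ^ 2) • X) (z : W) (X Y : V) :
    ⟪J z X, J z Y⟫_ℝ = 16 * ‖z‖ ^ 2 * ⟪X, Y⟫_ℝ := by
  rw [inner_J_apply_comm hbr hJ, hH, real_inner_smul_left, real_inner_comm]
  ring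

theorem norm_J_sq (hbr : br.IsAlt) (hJ : ∀ z X Y, ⟪J z X, Y⟫_ℝ = ⟪z, br X Y⟫_ℝ)
    (hH : ∀ z X, J z (J z X) = (-16 * ‖z‖ ^ 2) • X) (z : W) (X : V) :
    ‖J z X‖ ^ 2 = 16 * ‖z‖ ^ 2 * ‖X‖ ^ 2 := by
  rw [← real_inner_self_eq_norm_sq, inner_J_J hbr hJ hH, real_inner_self_eq_norm_sq]

theorem norm_smul_add_J_sq (hbr : br.IsAlt) (hJ : ∀ z X Y, ⟪J z X, Y⟫_ℝ = ⟪z, br X Y⟫_ℝ)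
    (hH : ∀ z X, J z (J z X) = (-16 * ‖z‖ ^ 2) • X) (a : ℝ) (z : W) (X : V) :
    ‖a • X + J z X‖ ^ 2 = (a ^ 2 + 16 * ‖z‖ ^ 2) * ‖X‖ ^ 2 := by
  have hcross : ⟪X, J z X⟫_ℝ = 0 := by rw [real_inner_comm, inner_J_apply_self hbr hJ]
  rw [norm_add_sq_real, norm_smul, real_inner_smul_left, hcross, norm_J_sq hbr hJ hH,
    mul_pow, Real.norm_eq_abs, sq_abs]
  ring

theorem norm_br_sq_eq_sum {κ : Type*} [Fintype κ] (hbr : br.IsAlt)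
    (hJ : ∀ z X Y, ⟪J z X, Y⟫_ℝ = ⟪z, br X Y⟫_ℝ) (T : OrthonormalBasis κ ℝ W) (S X : V) :
    ‖br S X‖ ^ 2 = ∑ k, ⟪J (T k) X, S⟫_ℝ ^ 2 := by
  rw [← T.sum_sq_inner_right]
  refine Finset.sum_congr rfl fun k _ => ?_
  rw [hJ, ← hbr.neg, inner_neg_right, neg_sq]

theorem J_mem_orthogonal (hbr : br.IsAlt) (hJ : ∀ z X Y, ⟪J z X, Y⟫_ℝ = ⟪z, br X Y⟫_ℝ)
    {V₁ : Submodule ℝ V} (hbr12 : ∀ X ∈ V₁, ∀ Y ∈ V₁ᗮ, br X Y = 0) (z : W) {Y : V}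
    (hY : Y ∈ V₁ᗮ) : J z Y ∈ V₁ᗮ := by
  rw [Submodule.mem_orthogonal]
  intro X hX
  rw [real_inner_comm, hJ, ← hbr.neg, hbr12 X hX Y hY, neg_zero, inner_zero_right]

end HType

section Projection

variable {V : Type*} [NormedAddCommGroup V] [InnerProductSpace ℝ V] [FiniteDimensional ℝ V]
  (V₁ : Submodule ℝ V)

theorem projPerp_mem (X : V) : projPerp V₁ X ∈ V₁ᗮ := Submodule.coe_mem _

theorem sub_projPerp_mem (X : V) : X - projPerp V₁ X ∈ V₁ := by
  have h := V₁ᗮ.sub_starProjection_mem_orthogonal X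
  rwa [Submodule.orthogonal_orthogonal] at h

theorem inner_projPerp_left {S : V} (hS : S ∈ V₁ᗮ) (X : V) :
    ⟪projPerp V₁ X, S⟫_ℝ = ⟪X, S⟫_ℝ := by
  have h := Submodule.inner_right_of_mem_orthogonal (sub_projPerp_mem V₁ X) hS
  rw [inner_sub_left, sub_eq_zero] at h
  exact h.symm

theorem br_projPerp {W : Type*} [AddCommGroup W] [Module ℝ W] {br : V →ₗ[ℝ] V →ₗ[ℝ] W}
    (hbr : br.IsAlt) (hbr12 : ∀ X ∈ V₁, ∀ Y ∈ V₁ᗮ, br X Y = 0) {S : V} (hS : S ∈ V₁ᗮ) (X : V) :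
    br S (projPerp V₁ X) = br S X := by
  have h := hbr12 _ (sub_projPerp_mem V₁ X) S hS
  rw [map_sub, LinearMap.sub_apply, sub_eq_zero] at h
  rw [← hbr.neg (projPerp V₁ X), ← hbr.neg X, h]

end Projection

theorem derivKfun_eq_inner {V W : Type*} [NormedAddCommGroup V] [InnerProductSpace ℝ V]
    [FiniteDimensional ℝ V] [NormedAddCommGroup W] [InnerProductSpace ℝ W]
    {br : V →ₗ[ℝ] V →ₗ[ℝ] W} (hbr : br.IsAlt) {J : W →ₗ[ℝ] V →ₗ[ℝ] V}
    (hJ : ∀ z X Y, ⟪J z X, Y⟫_ℝ = ⟪z, br X Y⟫_ℝ) {V₁ : Submodule ℝ V}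
    (hbr12 : ∀ X ∈ V₁, ∀ Y ∈ V₁ᗮ, br X Y = 0) {S : V} (hS : S ∈ V₁ᗮ) (x : V × W) :
    derivKfun br S x
      = ⟪(4 * ‖x.1‖ ^ 2) • projPerp V₁ x.1 + J x.2 (projPerp V₁ x.1), S⟫_ℝ := by
  rw [derivKfun, ← inner_projPerp_left V₁ hS, ← br_projPerp V₁ hbr hbr12 hS, ← hJ,
    inner_J_apply_comm hbr hJ, inner_add_left, real_inner_smul_left]
  ring

namespace OrthonormalBasis

variable {ι E : Type*} [Fintype ι] [NormedAddCommGroup E] [InnerProductSpace ℝ E]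
  (b : OrthonormalBasis ι ℝ E) {K : Submodule ℝ E} {A : Finset ι}

theorem sum_inner_sq_of_mem (hAc : ∀ i ∉ A, b i ∈ Kᗮ) {u : E} (hu : u ∈ K) :
    ∑ i ∈ A, ⟪u, b i⟫_ℝ ^ 2 = ‖u‖ ^ 2 := by
  rw [← b.sum_sq_inner_left u]
  refine Finset.sum_subset (Finset.subset_univ A) fun i _ hi => ?_
  rw [Submodule.inner_right_of_mem_orthogonal hu (hAc i hi), sq, zero_mul]

theorem card_le_finrank_of_mem (hA : ∀ i ∈ A, b i ∈ K) : A.card ≤ Module.finrank ℝ K := by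
  have : FiniteDimensional ℝ E := b.toBasis.finiteDimensional_of_finite
  have hli : LinearIndependent ℝ fun i : A => b i :=
    b.orthonormal.linearIndependent.comp _ Subtype.val_injective
  calc A.card = Module.finrank ℝ (Submodule.span ℝ (Set.range fun i : A => b i)) := by
        rw [finrank_span_eq_card hli, Fintype.card_coe]
    _ ≤ Module.finrank ℝ K :=
        Submodule.finrank_mono (Submodule.span_le.2 (Set.range_subset_iff.2 fun i => hA i i.2))

theorem card_eq_finrank_of_mem (hA : ∀ i ∈ A, b i ∈ K) (hAc : ∀ i ∉ A, b i ∈ Kᗮ) :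
    A.card = Module.finrank ℝ K := by
  classical
  have : FiniteDimensional ℝ E := b.toBasis.finiteDimensional_of_finite
  have hle := b.card_le_finrank_of_mem hA
  have hle' := b.card_le_finrank_of_mem (A := Aᶜ) fun i hi => hAc i (Finset.mem_compl.1 hi)
  have htotal := K.finrank_add_finrank_orthogonal
  rw [Module.finrank_eq_card_basis b.toBasis] at htotal
  rw [Finset.card_compl] at hle'
  have := A.card_le_univ
  omega

end OrthonormalBasis

theorem Ks_add_one {V W : Type*} [NormedAddCommGroup V] [NormedAddCommGroup W] {x : V × W}
    (hx : x ≠ 0) (s : ℂ) : Ks (s + 1) x = Ks s x * Kfun x := by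
  rw [Ks, Complex.cpow_add _ _ (Complex.ofReal_ne_zero.2 (Kfun_pos hx).ne'), Complex.cpow_one, Ks]

section AdaptedBasis

variable {V W ι : Type*} [NormedAddCommGroup V] [InnerProductSpace ℝ V] [FiniteDimensional ℝ V]
  [NormedAddCommGroup W] [InnerProductSpace ℝ W] [Fintype ι]
  {br : V →ₗ[ℝ] V →ₗ[ℝ] W} (hbr : br.IsAlt) {J : W →ₗ[ℝ] V →ₗ[ℝ] V}
  (hJ : ∀ z X Y, ⟪J z X, Y⟫_ℝ = ⟪z, br X Y⟫_ℝ) (hH : ∀ z X, J z (J z X) = (-16 * ‖z‖ ^ 2) • X)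
  {V₁ : Submodule ℝ V} (hbr12 : ∀ X ∈ V₁, ∀ Y ∈ V₁ᗮ, br X Y = 0)
  (S : OrthonormalBasis ι ℝ V) {A : Finset ι} (hA : ∀ j ∈ A, S j ∈ V₁ᗮ)
  (hAc : ∀ j ∉ A, S j ∈ V₁ᗮᗮ)
include hA hAc

theorem sum_inner_sq_eq_norm_projPerp (X : V) :
    ∑ j ∈ A, ⟪X, S j⟫_ℝ ^ 2 = ‖projPerp V₁ X‖ ^ 2 := by
  rw [← S.sum_inner_sq_of_mem hAc (projPerp_mem V₁ X)]
  exact Finset.sum_congr rfl fun j hj => by rw [inner_projPerp_left V₁ (hA j hj)]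

include hbr hJ hH hbr12

theorem sum_norm_br_sq {κ : Type*} [Fintype κ] (T : OrthonormalBasis κ ℝ W) (X : V) :
    ∑ j ∈ A, ‖br (S j) X‖ ^ 2 = 16 * Fintype.card κ * ‖projPerp V₁ X‖ ^ 2 := by
  calc ∑ j ∈ A, ‖br (S j) X‖ ^ 2
      = ∑ j ∈ A, ∑ k, ⟪J (T k) (projPerp V₁ X), S j⟫_ℝ ^ 2 :=
        Finset.sum_congr rfl fun j hj => by
          rw [← br_projPerp V₁ hbr hbr12 (hA j hj), norm_br_sq_eq_sum hbr hJ T]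
    _ = ∑ k, ∑ j ∈ A, ⟪J (T k) (projPerp V₁ X), S j⟫_ℝ ^ 2 := Finset.sum_comm
    _ = ∑ k, 16 * ‖T k‖ ^ 2 * ‖projPerp V₁ X‖ ^ 2 :=
        Finset.sum_congr rfl fun k _ => by
          rw [S.sum_inner_sq_of_mem hAc (J_mem_orthogonal hbr hJ hbr12 _ (projPerp_mem V₁ X)),
            norm_J_sq hbr hJ hH]
    _ = 16 * Fintype.card κ * ‖projPerp V₁ X‖ ^ 2 := by
        simp only [T.norm_eq_one, one_pow, mul_one, Finset.sum_const, Finset.card_univ,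
          nsmul_eq_mul]
        ring

theorem sum_derivKfun_sq (x : V × W) :
    ∑ j ∈ A, derivKfun br (S j) x ^ 2 = 16 * ‖projPerp V₁ x.1‖ ^ 2 * Kfun x := by
  have hu : (4 * ‖x.1‖ ^ 2) • projPerp V₁ x.1 + J x.2 (projPerp V₁ x.1) ∈ V₁ᗮ :=
    V₁ᗮ.add_mem (V₁ᗮ.smul_mem _ (projPerp_mem V₁ _))
      (J_mem_orthogonal hbr hJ hbr12 _ (projPerp_mem V₁ _))
  rw [← Finset.sum_congr rfl fun j hj => by rw [derivKfun_eq_inner hbr hJ hbr12 (hA j hj) x],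
    S.sum_inner_sq_of_mem hAc hu, norm_smul_add_J_sq hbr hJ hH, Kfun]
  ring

end AdaptedBasis

theorem delta2Ks_general {V W : Type*} [NormedAddCommGroup V] [InnerProductSpace ℝ V]
    [NormedAddCommGroup W] [InnerProductSpace ℝ W]
    [FiniteDimensional ℝ V]
    (p p₁ p₂ q : ℕ)
    (V₁ : Submodule ℝ V)
    (hp₂ : Module.finrank ℝ V₁ᗮ = p₂)
    (br : V →ₗ[ℝ] V →ₗ[ℝ] W) (hbr : ∀ X : V, br X X = 0)
    (hbr12 : ∀ X ∈ V₁, ∀ Y ∈ V₁ᗮ, br X Y = 0)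
    (J : W →ₗ[ℝ] V →ₗ[ℝ] V)
    (hJ : ∀ (z : W) (X Y : V), ⟪J z X, Y⟫_ℝ = ⟪z, br X Y⟫_ℝ)
    (hH : ∀ (z : W) (X : V), J z (J z X) = (-16 * ‖z‖^2) • X)
    (S : OrthonormalBasis (Fin p) ℝ V)
    (hS : ∀ j : Fin p, ((j : ℕ) < p₁ → S j ∈ V₁) ∧ (p₁ ≤ (j : ℕ) → S j ∈ V₁ᗮ))
    (T : OrthonormalBasis (Fin q) ℝ W)
    (s : ℂ) :
    ∀ x : V × W, x ≠ 0 →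
      subLap br (Finset.univ.filter fun j : Fin p => p₁ ≤ (j : ℕ)) (fun j => S j) (Ks s) x
        = (4*s*(p₂ : ℂ) * (‖x.1‖ : ℂ)^2
            + 8*s*(2*s + (q : ℂ) - 1) * (‖projPerp V₁ x.1‖ : ℂ)^2) * Ks (s-1) x := by
  intro x hx
  set A := Finset.univ.filter fun j : Fin p => p₁ ≤ (j : ℕ)
  have hA : ∀ j ∈ A, S j ∈ V₁ᗮ := fun j hj => (hS j).2 (Finset.mem_filter.1 hj).2
  have hAc : ∀ j ∉ A, S j ∈ V₁ᗮᗮ := fun j hj =>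
    V₁.le_orthogonal_orthogonal ((hS j).1 (by simpa [A] using hj))
  have hcard : A.card = p₂ := (S.card_eq_finrank_of_mem hA hAc).trans hp₂
  have hsum : ∑ j ∈ A, (8 * ⟪x.1, S j⟫_ℝ ^ 2 + 4 * ‖x.1‖ ^ 2 * ‖S j‖ ^ 2
      + 2⁻¹ * ‖br (S j) x.1‖ ^ 2) = 8 * (1 + q) * ‖projPerp V₁ x.1‖ ^ 2 + 4 * p₂ * ‖x.1‖ ^ 2 := by
    simp only [Finset.sum_add_distrib, ← Finset.mul_sum, S.norm_eq_one,
      sum_inner_sq_eq_norm_projPerp S hA hAc, sum_norm_br_sq hbr hJ hH hbr12 S hA hAc T]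
    simp only [one_pow, mul_one, Finset.sum_const, hcard, nsmul_eq_mul, Fintype.card_fin]
    ring
  have hK : Ks (s - 1) x = Ks (s - 2) x * Kfun x := by
    rw [← Ks_add_one hx]; ring_nf
  rw [subLap_Ks hbr A _ hx, sum_derivKfun_sq hbr hJ hH hbr12 S hA hAc, hsum, hK]
  push_cast
  ring

/-- `Δ₂ K_s = (4sp₂|X|² + 8s(2s+q-1)|X₂|²) K_{s-1}` on `(𝔳 × 𝔷) ∖ {(0,0)}`. -/
theorem delta2Ks {V W : Type*} [NormedAddCommGroup V] [InnerProductSpace ℝ V]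
    [NormedAddCommGroup W] [InnerProductSpace ℝ W]
    [FiniteDimensional ℝ V] [FiniteDimensional ℝ W]
    (p p₁ p₂ q : ℕ) (hp : Module.finrank ℝ V = p) (hq : Module.finrank ℝ W = q)
    (V₁ : Submodule ℝ V) (hp₁ : Module.finrank ℝ V₁ = p₁)
    (hp₂ : Module.finrank ℝ V₁ᗮ = p₂)
    (br : V →ₗ[ℝ] V →ₗ[ℝ] W) (hbr : ∀ X : V, br X X = 0)
    (hbr12 : ∀ X ∈ V₁, ∀ Y ∈ V₁ᗮ, br X Y = 0)
    (J : W →ₗ[ℝ] V →ₗ[ℝ] V)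
    (hJ : ∀ (z : W) (X Y : V), ⟪J z X, Y⟫_ℝ = ⟪z, br X Y⟫_ℝ)
    (hH : ∀ (z : W) (X : V), J z (J z X) = (-16 * ‖z‖^2) • X)
    (S : OrthonormalBasis (Fin p) ℝ V)
    (hS : ∀ j : Fin p, ((j : ℕ) < p₁ → S j ∈ V₁) ∧ (p₁ ≤ (j : ℕ) → S j ∈ V₁ᗮ))
    (T : OrthonormalBasis (Fin q) ℝ W)
    (s : ℂ) :
    ∀ x : V × W, x ≠ 0 →
      subLap br (Finset.univ.filter fun j : Fin p => p₁ ≤ (j : ℕ)) (fun j => S j) (Ks s) x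
        = (4*s*(p₂ : ℂ) * (‖x.1‖ : ℂ)^2
            + 8*s*(2*s + (q : ℂ) - 1) * (‖projPerp V₁ x.1‖ : ℂ)^2) * Ks (s-1) x :=
  delta2Ks_general p p₁ p₂ q V₁ hp₂ br hbr hbr12 J hJ hH S hS T s
end
end

section
/- Let s ∈ ℂ and k ∈ ℕ be such that D_{s,k} is defined. Then there exist complex constants C_{s,k}(i,j,ℓ), indexed by triples (i,j,ℓ) ∈ ℕ³ with i+j+2ℓ = k, such that for every smooth function f on an open subset of 𝔳 × 𝔷 one has D_{s,k} f = Σ_{i+j+2ℓ=k} C_{s,k}(i,j,ℓ) Δ₁^i Δ₂^j □^ℓ f. -/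
open scoped InnerProductSpace

noncomputable section

/-- The recursively defined family of differential operators `D_{s,k}`, built from
abstract operators `Lap = Δ`, `Lap2 = Δ₂`, `Box = □` and the constants
`ρ`, `ρ₁`, `q`, `p₂` (as complex numbers).  The first argument is `k`, the
second is `s`. -/
def Dop {α : Type*} (Lap Lap2 Box : (α → ℂ) → (α → ℂ)) (ρ ρ₁ qc p₂c : ℂ) :
    ℕ → ℂ → (α → ℂ) → (α → ℂ)
  | 0, _, f => f
  | 1, s, f => fun x =>
      (8*s*(4*s + 2*ρ - 2)*(2*s + qc - 1))⁻¹ *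
        ((4*s + 2*ρ - 2) * Lap2 f x - p₂c * Lap f x)
  | (k+2), s, f => fun x =>
      (8*(s - ((k : ℂ)+1))*(4*s + 2*ρ - 2)*(2*s + qc - 2*((k : ℂ)+1) - 1))⁻¹ *
        (((4*s + 2*ρ - 2) * Lap2 (Dop Lap Lap2 Box ρ ρ₁ qc p₂c (k+1) s f) x
            - (4*((k : ℂ)+1) + p₂c) * Lap (Dop Lap Lap2 Box ρ ρ₁ qc p₂c (k+1) s f) x)
          - (2*((k : ℂ)+1)*(2*((k : ℂ)+1) + p₂c - 2)*(4*s + 2*ρ₁ - 4*((k : ℂ)+1) - 2)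
              / (2*(4*s*(4*s + 2*ρ - 2))*(2*s + qc - 1)*(4*s + 2*ρ - 4)))
            * (Lap (Lap (Dop Lap Lap2 Box ρ ρ₁ qc p₂c k (s-1) f)) x
                + 4*(4*s + 2*ρ - 2)^2 * Box (Dop Lap Lap2 Box ρ ρ₁ qc p₂c k (s-1) f) x))

/-- The condition that all denominators occurring in the recursion defining `D_{s,k}`
(including those for the recursively used operators) are nonzero. -/
def Ddef (ρ qc : ℂ) : ℕ → ℂ → Prop
  | 0, _ => True
  | 1, s => 8*s*(4*s + 2*ρ - 2)*(2*s + qc - 1) ≠ 0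
  | (k+2), s =>
      8*(s - ((k : ℂ)+1))*(4*s + 2*ρ - 2)*(2*s + qc - 2*((k : ℂ)+1) - 1) ≠ 0 ∧
      2*(4*s*(4*s + 2*ρ - 2))*(2*s + qc - 1)*(4*s + 2*ρ - 4) ≠ 0 ∧
      Ddef ρ qc (k+1) s ∧ Ddef ρ qc k (s-1)

/-- `ρ₁ = (p₁+2q)/2` as a complex number. -/
def rho1C (p₁ q : ℕ) : ℂ := ((p₁ : ℂ) + 2*q)/2

set_option linter.unusedSectionVars false

/-! ### Auxiliary development -/

section AuxDev

variable {V W : Type*} [NormedAddCommGroup V] [InnerProductSpace ℝ V]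
    [NormedAddCommGroup W] [InnerProductSpace ℝ W]

/-- Locality of an operator. -/
def OpLoc (A : (V × W → ℂ) → (V × W → ℂ)) : Prop :=
  ∀ (U : Set (V × W)), IsOpen U → ∀ f g : V × W → ℂ, (∀ y ∈ U, f y = g y) →
    ∀ x ∈ U, A f x = A g x

/-- Preservation of smoothness by an operator. -/
def OpSmooth (A : (V × W → ℂ) → (V × W → ℂ)) : Prop :=
  ∀ (U : Set (V × W)), IsOpen U → ∀ f : V × W → ℂ, ContDiffOn ℝ (⊤ : ℕ∞) f U →
    ContDiffOn ℝ (⊤ : ℕ∞) (A f) U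

/-- Linearity over finite sums (with coefficients) of an operator, on smooth functions. -/
def OpSum (A : (V × W → ℂ) → (V × W → ℂ)) : Prop :=
  ∀ (U : Set (V × W)), IsOpen U → ∀ (t : Finset (ℕ × ℕ × ℕ)) (c : ℕ × ℕ × ℕ → ℂ)
    (g : ℕ × ℕ × ℕ → V × W → ℂ), (∀ i ∈ t, ContDiffOn ℝ (⊤ : ℕ∞) (g i) U) → ∀ x ∈ U,
    A (fun y => ∑ i ∈ t, c i * g i y) x = ∑ i ∈ t, c i * A (g i) x

/-- Commutation of two operators on smooth functions. -/
def OpComm (A B : (V × W → ℂ) → (V × W → ℂ)) : Prop :=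
  ∀ (U : Set (V × W)), IsOpen U → ∀ f : V × W → ℂ, ContDiffOn ℝ (⊤ : ℕ∞) f U →
    ∀ x ∈ U, A (B f) x = B (A f) x

variable {br : V →ₗ[ℝ] V →ₗ[ℝ] W}

lemma vfV_congr {U : Set (V × W)} (hU : IsOpen U) {f g : V × W → ℂ}
    (h : ∀ y ∈ U, f y = g y) {x : V × W} (hx : x ∈ U) (S : V) :
    vfV br S f x = vfV br S g x := by
  have hfg : f =ᶠ[nhds x] g := Filter.eventuallyEq_of_mem (hU.mem_nhds hx) h
  simp only [vfV, hfg.fderiv_eq]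

lemma vfW_congr {U : Set (V × W)} (hU : IsOpen U) {f g : V × W → ℂ}
    (h : ∀ y ∈ U, f y = g y) {x : V × W} (hx : x ∈ U) (T : W) :
    vfW T f x = vfW T g x := by
  have hfg : f =ᶠ[nhds x] g := Filter.eventuallyEq_of_mem (hU.mem_nhds hx) h
  simp only [vfW, hfg.fderiv_eq]

lemma opLoc_subLap {ι : Type*} (fs : Finset ι) (S : ι → V) :
    OpLoc (subLap br fs S) := by
  intro U hU f g h x hx
  simp only [subLap]
  refine Finset.sum_congr rfl fun j _ => ?_
  exact vfV_congr hU (fun y hy => vfV_congr hU h hy _) hx _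

lemma opLoc_boxLap {κ : Type*} (fs : Finset κ) (T : κ → W) :
    OpLoc (boxLap (V := V) fs T) := by
  intro U hU f g h x hx
  simp only [boxLap]
  refine Finset.sum_congr rfl fun j _ => ?_
  exact vfW_congr hU (fun y hy => vfW_congr hU h hy _) hx _

variable [FiniteDimensional ℝ V]

lemma contDiffOn_vfV {U : Set (V × W)} (hU : IsOpen U) {f : V × W → ℂ}
    (hf : ContDiffOn ℝ (⊤ : ℕ∞) f U) (S : V) : ContDiffOn ℝ (⊤ : ℕ∞) (vfV br S f) U := by
  have hF : ContDiffOn ℝ (⊤ : ℕ∞) (fderiv ℝ f) U := hf.fderiv_of_isOpen hU (by simp)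
  have hc : ContDiff ℝ (⊤ : ℕ∞) (fun x : V × W => ((0 : V), br S x.1)) := by
    have : ContDiff ℝ (⊤ : ℕ∞) (fun x : V × W =>
        ((0 : V), (LinearMap.toContinuousLinearMap (br S)) x.1)) :=
      contDiff_const.prodMk ((ContinuousLinearMap.contDiff _).comp contDiff_fst)
    simpa using this
  exact (hF.clm_apply contDiffOn_const).sub
    (contDiffOn_const.mul (hF.clm_apply hc.contDiffOn))

lemma contDiffOn_vfW {U : Set (V × W)} (hU : IsOpen U) {f : V × W → ℂ}
    (hf : ContDiffOn ℝ (⊤ : ℕ∞) f U) (T : W) : ContDiffOn ℝ (⊤ : ℕ∞) (vfW T f) U := by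
  have hF : ContDiffOn ℝ (⊤ : ℕ∞) (fderiv ℝ f) U := hf.fderiv_of_isOpen hU (by simp)
  exact hF.clm_apply contDiffOn_const

lemma opSmooth_subLap {ι : Type*} (fs : Finset ι) (S : ι → V) :
    OpSmooth (subLap br fs S) := by
  intro U hU f hf
  exact ContDiffOn.sum fun j _ => contDiffOn_vfV hU (contDiffOn_vfV hU hf _) _

lemma opSmooth_boxLap {κ : Type*} (fs : Finset κ) (T : κ → W) :
    OpSmooth (boxLap (V := V) fs T) := by
  intro U hU f hf
  exact ContDiffOn.sum fun j _ => contDiffOn_vfW hU (contDiffOn_vfW hU hf _) _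


lemma vfV_const_mul {f : V × W → ℂ} {x : V × W} (hf : DifferentiableAt ℝ f x)
    (c : ℂ) (S : V) : vfV br S (fun y => c * f y) x = c * vfV br S f x := by
  simp only [vfV, fderiv_const_mul hf c, ContinuousLinearMap.smul_apply, smul_eq_mul]
  ring

lemma vfW_const_mul {f : V × W → ℂ} {x : V × W} (hf : DifferentiableAt ℝ f x)
    (c : ℂ) (T : W) : vfW T (fun y => c * f y) x = c * vfW T f x := by
  simp only [vfW, fderiv_const_mul hf c, ContinuousLinearMap.smul_apply, smul_eq_mul]

lemma vfV_sum {ι : Type*} {t : Finset ι} {g : ι → V × W → ℂ} {x : V × W}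
    (hg : ∀ i ∈ t, DifferentiableAt ℝ (g i) x) (S : V) :
    vfV br S (fun y => ∑ i ∈ t, g i y) x = ∑ i ∈ t, vfV br S (g i) x := by
  simp only [vfV, fderiv_fun_sum hg, ContinuousLinearMap.sum_apply, Finset.mul_sum,
    ← Finset.sum_sub_distrib]

lemma vfW_sum {ι : Type*} {t : Finset ι} {g : ι → V × W → ℂ} {x : V × W}
    (hg : ∀ i ∈ t, DifferentiableAt ℝ (g i) x) (T : W) :
    vfW T (fun y => ∑ i ∈ t, g i y) x = ∑ i ∈ t, vfW T (g i) x := by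
  simp only [vfW, fderiv_fun_sum hg, ContinuousLinearMap.sum_apply]

lemma diffAt_of_contDiffOn {F : Type*} [NormedAddCommGroup F] [NormedSpace ℝ F]
    {U : Set (V × W)} (hU : IsOpen U) {f : V × W → F}
    (hf : ContDiffOn ℝ (⊤ : ℕ∞) f U) {x : V × W} (hx : x ∈ U) : DifferentiableAt ℝ f x :=
  ((hf.contDiffAt (hU.mem_nhds hx)).differentiableAt (by simp))

lemma vfV_csum {ι : Type*} {U : Set (V × W)} (hU : IsOpen U) {t : Finset ι}
    {c : ι → ℂ} {g : ι → V × W → ℂ} (hg : ∀ i ∈ t, ContDiffOn ℝ (⊤ : ℕ∞) (g i) U)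
    {x : V × W} (hx : x ∈ U) (S : V) :
    vfV br S (fun y => ∑ i ∈ t, c i * g i y) x = ∑ i ∈ t, c i * vfV br S (g i) x := by
  rw [vfV_sum (g := fun i => fun y => c i * g i y)
    (fun i hi => (diffAt_of_contDiffOn hU (hg i hi) hx).const_mul _) S]
  exact Finset.sum_congr rfl fun i hi =>
    vfV_const_mul (diffAt_of_contDiffOn hU (hg i hi) hx) _ _

lemma vfW_csum {ι : Type*} {U : Set (V × W)} (hU : IsOpen U) {t : Finset ι}
    {c : ι → ℂ} {g : ι → V × W → ℂ} (hg : ∀ i ∈ t, ContDiffOn ℝ (⊤ : ℕ∞) (g i) U)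
    {x : V × W} (hx : x ∈ U) (T : W) :
    vfW T (fun y => ∑ i ∈ t, c i * g i y) x = ∑ i ∈ t, c i * vfW T (g i) x := by
  rw [vfW_sum (g := fun i => fun y => c i * g i y)
    (fun i hi => (diffAt_of_contDiffOn hU (hg i hi) hx).const_mul _) T]
  exact Finset.sum_congr rfl fun i hi =>
    vfW_const_mul (diffAt_of_contDiffOn hU (hg i hi) hx) _ _

lemma vfV_sq_csum {ι : Type*} {U : Set (V × W)} (hU : IsOpen U) {t : Finset ι}
    {c : ι → ℂ} {g : ι → V × W → ℂ} (hg : ∀ i ∈ t, ContDiffOn ℝ (⊤ : ℕ∞) (g i) U)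
    {x : V × W} (hx : x ∈ U) (S : V) :
    vfV br S (vfV br S (fun y => ∑ i ∈ t, c i * g i y)) x
      = ∑ i ∈ t, c i * vfV br S (vfV br S (g i)) x := by
  have h1 : ∀ y ∈ U, vfV br S (fun y => ∑ i ∈ t, c i * g i y) y
      = (fun y => ∑ i ∈ t, c i * vfV br S (g i) y) y :=
    fun y hy => vfV_csum hU hg hy S
  rw [vfV_congr hU h1 hx S]
  exact vfV_csum hU (fun i hi => contDiffOn_vfV hU (hg i hi) _) hx S

lemma vfW_sq_csum {ι : Type*} {U : Set (V × W)} (hU : IsOpen U) {t : Finset ι}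
    {c : ι → ℂ} {g : ι → V × W → ℂ} (hg : ∀ i ∈ t, ContDiffOn ℝ (⊤ : ℕ∞) (g i) U)
    {x : V × W} (hx : x ∈ U) (T : W) :
    vfW T (vfW T (fun y => ∑ i ∈ t, c i * g i y)) x
      = ∑ i ∈ t, c i * vfW T (vfW T (g i)) x := by
  have h1 : ∀ y ∈ U, vfW T (fun y => ∑ i ∈ t, c i * g i y) y
      = (fun y => ∑ i ∈ t, c i * vfW T (g i) y) y :=
    fun y hy => vfW_csum hU hg hy T
  rw [vfW_congr hU h1 hx T]
  exact vfW_csum hU (fun i hi => contDiffOn_vfW hU (hg i hi) _) hx T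

lemma opSum_subLap {ι : Type*} (fs : Finset ι) (S : ι → V) :
    OpSum (subLap br fs S) := by
  intro U hU t c g hg x hx
  simp only [subLap]
  refine (Finset.sum_congr rfl fun j _ => vfV_sq_csum hU hg hx (S j)).trans ?_
  rw [Finset.sum_comm]
  exact Finset.sum_congr rfl fun i _ => (Finset.mul_sum _ _ _).symm

lemma opSum_boxLap {κ : Type*} (fs : Finset κ) (T : κ → W) :
    OpSum (boxLap (V := V) fs T) := by
  intro U hU t c g hg x hx
  simp only [boxLap]
  refine (Finset.sum_congr rfl fun j _ => vfW_sq_csum hU hg hx (T j)).trans ?_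
  rw [Finset.sum_comm]
  exact Finset.sum_congr rfl fun i _ => (Finset.mul_sum _ _ _).symm


lemma fderiv_vfW_apply {U : Set (V × W)} (hU : IsOpen U) {f : V × W → ℂ}
    (hf : ContDiffOn ℝ (⊤ : ℕ∞) f U) {x : V × W} (hx : x ∈ U) (T : W) (v : V × W) :
    fderiv ℝ (vfW T f) x v = fderiv ℝ (fderiv ℝ f) x v (0, T) := by
  have hFd : DifferentiableAt ℝ (fderiv ℝ f) x :=
    diffAt_of_contDiffOn hU (hf.fderiv_of_isOpen hU (by simp)) hx
  have : fderiv ℝ (fun y => fderiv ℝ f y ((0 : V), T)) x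
      = (fderiv ℝ f x).comp (fderiv ℝ (fun _ : V × W => ((0:V), T)) x)
        + (fderiv ℝ (fderiv ℝ f) x).flip ((0:V), T) :=
    fderiv_clm_apply hFd (differentiableAt_const _)
  rw [show (vfW T f : V × W → ℂ) = fun y => fderiv ℝ f y ((0:V), T) from rfl, this]
  simp

/-- The continuous linear map `v ↦ (0, br S' v.1)`. -/
def brCLM (br : V →ₗ[ℝ] V →ₗ[ℝ] W) (S' : V) : V × W →L[ℝ] V × W :=
  (0 : V × W →L[ℝ] V).prod
    ((LinearMap.toContinuousLinearMap (br S')).comp (ContinuousLinearMap.fst ℝ V W))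

lemma brCLM_apply (S' : V) (v : V × W) : brCLM br S' v = ((0 : V), br S' v.1) := by
  simp [brCLM]

lemma fderiv_vfV_apply {U : Set (V × W)} (hU : IsOpen U) {f : V × W → ℂ}
    (hf : ContDiffOn ℝ (⊤ : ℕ∞) f U) {x : V × W} (hx : x ∈ U) (S' : V) (v : V × W) :
    fderiv ℝ (vfV br S' f) x v = fderiv ℝ (fderiv ℝ f) x v (S', 0)
      - (1/2 : ℂ) * (fderiv ℝ f x (0, br S' v.1)
          + fderiv ℝ (fderiv ℝ f) x v (0, br S' x.1)) := by
  have hFd : DifferentiableAt ℝ (fderiv ℝ f) x :=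
    diffAt_of_contDiffOn hU (hf.fderiv_of_isOpen hU (by simp)) hx
  have hveq : vfV br S' f = fun y =>
      fderiv ℝ f y (S', 0) - (1/2 : ℂ) * fderiv ℝ f y (brCLM br S' y) := by
    funext y; simp only [vfV, brCLM_apply]
  have dA : DifferentiableAt ℝ (fun y => fderiv ℝ f y (S', (0:W))) x :=
    hFd.clm_apply (differentiableAt_const _)
  have dB : DifferentiableAt ℝ (fun y => fderiv ℝ f y (brCLM br S' y)) x :=
    hFd.clm_apply (brCLM br S').differentiableAt
  have hA : fderiv ℝ (fun y => fderiv ℝ f y (S', (0:W))) x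
      = (fderiv ℝ f x).comp (fderiv ℝ (fun _ : V × W => (S', (0:W))) x)
        + (fderiv ℝ (fderiv ℝ f) x).flip (S', 0) :=
    fderiv_clm_apply hFd (differentiableAt_const _)
  have hB : fderiv ℝ (fun y => fderiv ℝ f y (brCLM br S' y)) x
      = (fderiv ℝ f x).comp (fderiv ℝ (fun y : V × W => brCLM br S' y) x)
        + (fderiv ℝ (fderiv ℝ f) x).flip (brCLM br S' x) :=
    fderiv_clm_apply hFd (brCLM br S').differentiableAt
  rw [hveq, fderiv_fun_sub dA (dB.const_mul _), fderiv_const_mul dB, hA, hB]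
  have hCLM : fderiv ℝ (fun y : V × W => brCLM br S' y) x = brCLM br S' :=
    (brCLM br S').fderiv
  simp only [hCLM, fderiv_fun_const, Pi.zero_apply, ContinuousLinearMap.comp_zero,
    zero_add, ContinuousLinearMap.sub_apply, ContinuousLinearMap.smul_apply,
    ContinuousLinearMap.add_apply, ContinuousLinearMap.comp_apply,
    ContinuousLinearMap.flip_apply, smul_eq_mul]
  simp only [brCLM_apply]


lemma vfV_comm {U : Set (V × W)} (hU : IsOpen U) {f : V × W → ℂ}
    (hf : ContDiffOn ℝ (⊤ : ℕ∞) f U) {x : V × W} (hx : x ∈ U) {a b : V}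
    (hab : br a b = 0) (hba : br b a = 0) :
    vfV br a (vfV br b f) x = vfV br b (vfV br a f) x := by
  have hsymm : IsSymmSndFDerivAt ℝ f x :=
    (hf.contDiffAt (hU.mem_nhds hx)).isSymmSndFDerivAt (by rw [minSmoothness_of_isRCLikeNormedField]; exact WithTop.coe_le_coe.2 le_top)
  have h1 := hsymm.eq (a, (0:W)) (b, (0:W))
  have h2 := hsymm.eq (a, (0:W)) ((0:V), br b x.1)
  have h3 := hsymm.eq ((0:V), br a x.1) (b, (0:W))
  have h4 := hsymm.eq ((0:V), br a x.1) ((0:V), br b x.1)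
  rw [show vfV br a (vfV br b f) x = fderiv ℝ (vfV br b f) x (a, 0)
        - (1/2 : ℂ) * fderiv ℝ (vfV br b f) x (0, br a x.1) from rfl,
      show vfV br b (vfV br a f) x = fderiv ℝ (vfV br a f) x (b, 0)
        - (1/2 : ℂ) * fderiv ℝ (vfV br a f) x (0, br b x.1) from rfl,
      fderiv_vfV_apply hU hf hx b (a, 0), fderiv_vfV_apply hU hf hx b (0, br a x.1),
      fderiv_vfV_apply hU hf hx a (b, 0), fderiv_vfV_apply hU hf hx a (0, br b x.1)]
  simp only [Prod.fst, hab, hba, map_zero, Prod.mk_zero_zero,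
    ContinuousLinearMap.map_zero]
  linear_combination h1 - (1/2 : ℂ) * h2 - (1/2 : ℂ) * h3 + (1/4 : ℂ) * h4

lemma vfW_vfV_comm {U : Set (V × W)} (hU : IsOpen U) {f : V × W → ℂ}
    (hf : ContDiffOn ℝ (⊤ : ℕ∞) f U) {x : V × W} (hx : x ∈ U) (T : W) (S' : V) :
    vfW T (vfV br S' f) x = vfV br S' (vfW T f) x := by
  have hsymm : IsSymmSndFDerivAt ℝ f x :=
    (hf.contDiffAt (hU.mem_nhds hx)).isSymmSndFDerivAt (by rw [minSmoothness_of_isRCLikeNormedField]; exact WithTop.coe_le_coe.2 le_top)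
  have h1 := hsymm.eq ((0:V), T) (S', (0:W))
  have h2 := hsymm.eq ((0:V), T) ((0:V), br S' x.1)
  rw [show vfW T (vfV br S' f) x = fderiv ℝ (vfV br S' f) x (0, T) from rfl,
      show vfV br S' (vfW T f) x = fderiv ℝ (vfW T f) x (S', 0)
        - (1/2 : ℂ) * fderiv ℝ (vfW T f) x (0, br S' x.1) from rfl,
      fderiv_vfV_apply hU hf hx S' (0, T), fderiv_vfW_apply hU hf hx T (S', 0),
      fderiv_vfW_apply hU hf hx T (0, br S' x.1)]
  simp only [Prod.fst, map_zero, Prod.mk_zero_zero, ContinuousLinearMap.map_zero]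
  linear_combination h1 - (1/2 : ℂ) * h2

section OpsAbstract

variable {A B : (V × W → ℂ) → (V × W → ℂ)}

omit [FiniteDimensional ℝ V] in
lemma OpLoc.iterate (hA : OpLoc A) (n : ℕ) : OpLoc (A^[n]) := by
  induction n with
  | zero => intro U hU f g h x hx; simpa using h x hx
  | succ n ih =>
    intro U hU f g h x hx
    rw [Function.iterate_succ_apply', Function.iterate_succ_apply']
    exact hA U hU _ _ (fun y hy => ih U hU f g h y hy) x hx

omit [FiniteDimensional ℝ V] in
lemma OpSmooth.iterate (hA : OpSmooth A) (n : ℕ) : OpSmooth (A^[n]) := by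
  induction n with
  | zero => intro U hU f hf; simpa using hf
  | succ n ih =>
    intro U hU f hf
    rw [Function.iterate_succ_apply']
    exact hA U hU _ (ih U hU f hf)

omit [FiniteDimensional ℝ V] in
lemma OpComm.symm (h : OpComm A B) : OpComm B A :=
  fun U hU f hf x hx => (h U hU f hf x hx).symm

omit [FiniteDimensional ℝ V] in
/-- Pull `B` through iterates of itself being commuted with `A`. -/
lemma OpComm.iterate_right (hAl : OpLoc A) (hBl : OpLoc B) (hBs : OpSmooth B)
    (h : OpComm A B) (n : ℕ) : OpComm A (B^[n]) := by
  induction n with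
  | zero => intro U hU f hf x hx; simp
  | succ n ih =>
    intro U hU f hf x hx
    rw [Function.iterate_succ_apply']
    calc A (B (B^[n] f)) x = B (A (B^[n] f)) x :=
          h U hU _ (hBs.iterate n U hU f hf) x hx
      _ = B (B^[n] (A f)) x :=
          hBl U hU _ _ (fun y hy => ih U hU f hf y hy) x hx
      _ = B^[n+1] (A f) x := by rw [Function.iterate_succ_apply']

omit [FiniteDimensional ℝ V] in
lemma OpComm.pull_sq_left (hAl : OpLoc A) (hAs : OpSmooth A) (h : OpComm A B) :
    OpComm (fun f => A (A f)) B := by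
  intro U hU f hf x hx
  show A (A (B f)) x = B (A (A f)) x
  calc A (A (B f)) x = A (B (A f)) x :=
        hAl U hU _ _ (fun y hy => h U hU f hf y hy) x hx
    _ = B (A (A f)) x := h U hU (A f) (hAs U hU f hf) x hx

omit [FiniteDimensional ℝ V] in
lemma OpComm.sq (hAl : OpLoc A) (hAs : OpSmooth A) (hBl : OpLoc B) (hBs : OpSmooth B)
    (h : OpComm A B) : OpComm (fun f => A (A f)) (fun f => B (B f)) := by
  intro U hU f hf x hx
  show A (A (B (B f))) x = B (B (A (A f))) x
  calc A (A (B (B f))) x = B (A (A (B f))) x :=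
        (h.pull_sq_left hAl hAs) U hU (B f) (hBs U hU f hf) x hx
    _ = B (B (A (A f))) x :=
        hBl U hU _ _ (fun y hy => (h.pull_sq_left hAl hAs) U hU f hf y hy) x hx

end OpsAbstract

lemma opComm_subLap_subLap {ι κ : Type*} (fsA : Finset ι) (fsB : Finset κ)
    (Sa : ι → V) (Sb : κ → V)
    (hcond : ∀ i ∈ fsA, ∀ j ∈ fsB, br (Sa i) (Sb j) = 0 ∧ br (Sb j) (Sa i) = 0) :
    OpComm (subLap br fsA Sa) (subLap br fsB Sb) := by
  intro U hU f hf x hx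
  have hB : ∀ j ∈ fsB, ContDiffOn ℝ (⊤ : ℕ∞) (vfV br (Sb j) (vfV br (Sb j) f)) U :=
    fun j _ => contDiffOn_vfV hU (contDiffOn_vfV hU hf _) _
  have hA : ∀ i ∈ fsA, ContDiffOn ℝ (⊤ : ℕ∞) (vfV br (Sa i) (vfV br (Sa i) f)) U :=
    fun i _ => contDiffOn_vfV hU (contDiffOn_vfV hU hf _) _
  have sq : ∀ i ∈ fsA, ∀ j ∈ fsB,
      vfV br (Sa i) (vfV br (Sa i) (vfV br (Sb j) (vfV br (Sb j) f))) x
        = vfV br (Sb j) (vfV br (Sb j) (vfV br (Sa i) (vfV br (Sa i) f))) x := by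
    intro i hi j hj
    have hcm : OpComm (vfV br (Sa i)) (vfV br (Sb j)) :=
      fun U' hU' g hg y hy =>
        vfV_comm hU' hg hy (hcond i hi j hj).1 (hcond i hi j hj).2
    exact hcm.sq (fun U' hU' g h hgh y hy => vfV_congr hU' hgh hy _)
      (fun U' hU' g hg => contDiffOn_vfV hU' hg _)
      (fun U' hU' g h hgh y hy => vfV_congr hU' hgh hy _)
      (fun U' hU' g hg => contDiffOn_vfV hU' hg _) U hU f hf x hx
  have expandL : subLap br fsA Sa (subLap br fsB Sb f) x
      = ∑ i ∈ fsA, ∑ j ∈ fsB,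
          vfV br (Sa i) (vfV br (Sa i) (vfV br (Sb j) (vfV br (Sb j) f))) x := by
    simp only [subLap]
    refine Finset.sum_congr rfl fun i _ => ?_
    have := vfV_sq_csum (br := br) (c := fun _ : κ => (1:ℂ))
      (g := fun j => vfV br (Sb j) (vfV br (Sb j) f)) hU hB hx (Sa i)
    simp only [one_mul] at this
    exact this
  have expandR : subLap br fsB Sb (subLap br fsA Sa f) x
      = ∑ j ∈ fsB, ∑ i ∈ fsA,
          vfV br (Sb j) (vfV br (Sb j) (vfV br (Sa i) (vfV br (Sa i) f))) x := by
    simp only [subLap]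
    refine Finset.sum_congr rfl fun j _ => ?_
    have := vfV_sq_csum (br := br) (c := fun _ : ι => (1:ℂ))
      (g := fun i => vfV br (Sa i) (vfV br (Sa i) f)) hU hA hx (Sb j)
    simp only [one_mul] at this
    exact this
  rw [expandL, expandR, Finset.sum_comm]
  exact Finset.sum_congr rfl fun j hj => Finset.sum_congr rfl fun i hi => sq i hi j hj

lemma opComm_boxLap_subLap {ι κ : Type*} (fsS : Finset ι) (fsT : Finset κ)
    (S : ι → V) (T : κ → W) :
    OpComm (boxLap (V := V) fsT T) (subLap br fsS S) := by
  intro U hU f hf x hx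
  have hB : ∀ i ∈ fsS, ContDiffOn ℝ (⊤ : ℕ∞) (vfV br (S i) (vfV br (S i) f)) U :=
    fun i _ => contDiffOn_vfV hU (contDiffOn_vfV hU hf _) _
  have hA : ∀ j ∈ fsT, ContDiffOn ℝ (⊤ : ℕ∞) (vfW (V := V) (T j) (vfW (T j) f)) U :=
    fun j _ => contDiffOn_vfW hU (contDiffOn_vfW hU hf _) _
  have sq : ∀ j ∈ fsT, ∀ i ∈ fsS,
      vfW (T j) (vfW (T j) (vfV br (S i) (vfV br (S i) f))) x
        = vfV br (S i) (vfV br (S i) (vfW (T j) (vfW (T j) f))) x := by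
    intro j hj i hi
    have hcm : OpComm (vfW (V := V) (T j)) (vfV br (S i)) :=
      fun U' hU' g hg y hy => vfW_vfV_comm hU' hg hy (T j) (S i)
    exact hcm.sq (fun U' hU' g h hgh y hy => vfW_congr hU' hgh hy _)
      (fun U' hU' g hg => contDiffOn_vfW hU' hg _)
      (fun U' hU' g h hgh y hy => vfV_congr hU' hgh hy _)
      (fun U' hU' g hg => contDiffOn_vfV hU' hg _) U hU f hf x hx
  have expandL : boxLap fsT T (subLap br fsS S f) x
      = ∑ j ∈ fsT, ∑ i ∈ fsS,
          vfW (T j) (vfW (T j) (vfV br (S i) (vfV br (S i) f))) x := by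
    simp only [boxLap, subLap]
    refine Finset.sum_congr rfl fun j _ => ?_
    have := vfW_sq_csum (c := fun _ : ι => (1:ℂ))
      (g := fun i => vfV br (S i) (vfV br (S i) f)) hU hB hx (T j)
    simp only [one_mul] at this
    exact this
  have expandR : subLap br fsS S (boxLap fsT T f) x
      = ∑ i ∈ fsS, ∑ j ∈ fsT,
          vfV br (S i) (vfV br (S i) (vfW (T j) (vfW (T j) f))) x := by
    simp only [boxLap, subLap]
    refine Finset.sum_congr rfl fun i _ => ?_
    have := vfV_sq_csum (br := br) (c := fun _ : κ => (1:ℂ))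
      (g := fun j => vfW (T j) (vfW (T j) f)) hU hA hx (S i)
    simp only [one_mul] at this
    exact this
  rw [expandL, expandR, Finset.sum_comm]
  exact Finset.sum_congr rfl fun i hi => Finset.sum_congr rfl fun j hj => sq j hj i hi


end AuxDev

/-- The index set `{(i,j,l) : i+j+2l = k}` (within suitable ranges). -/
def Tset (k : ℕ) : Finset (ℕ × ℕ × ℕ) :=
  (Finset.range (k+1) ×ˢ Finset.range (k+1) ×ˢ Finset.range (k+1)).filter
    fun t => t.1 + t.2.1 + 2*t.2.2 = k

lemma mem_Tset {k : ℕ} {t : ℕ × ℕ × ℕ} : t ∈ Tset k ↔ t.1 + t.2.1 + 2*t.2.2 = k := by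
  simp only [Tset, Finset.mem_filter, Finset.mem_product, Finset.mem_range]
  omega

lemma Tset_reindex (k k' : ℕ) (φ : ℕ × ℕ × ℕ → ℕ × ℕ × ℕ)
    (hφ : ∀ t ∈ Tset k, φ t ∈ Tset k') (C : ℕ × ℕ × ℕ → ℂ) :
    ∃ C' : ℕ → ℕ → ℕ → ℂ, ∀ g : ℕ × ℕ × ℕ → ℂ,
      ∑ t ∈ Tset k', C' t.1 t.2.1 t.2.2 * g t = ∑ t ∈ Tset k, C t * g (φ t) := by
  refine ⟨fun i j l => ∑ t ∈ (Tset k).filter (fun t => φ t = (i, j, l)), C t,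
    fun g => ?_⟩
  rw [← Finset.sum_fiberwise_of_maps_to hφ (fun t => C t * g (φ t))]
  refine Finset.sum_congr rfl fun t' _ => ?_
  rw [Finset.sum_mul]
  exact Finset.sum_congr rfl fun t ht => by rw [(Finset.mem_filter.1 ht).2]

section PolyDev

variable {V W : Type*} [NormedAddCommGroup V] [InnerProductSpace ℝ V]
    [NormedAddCommGroup W] [InnerProductSpace ℝ W]

variable (L1 L2 Bx : (V × W → ℂ) → (V × W → ℂ))

/-- `Fop t f = L1^[i] (L2^[j] (Bx^[l] f))`. -/
def Fop (t : ℕ × ℕ × ℕ) (f : V × W → ℂ) : V × W → ℂ :=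
  L1^[t.1] (L2^[t.2.1] (Bx^[t.2.2] f))

/-- The operator `D` is, on smooth functions, a constant-coefficient polynomial of
degree `k` in `L1`, `L2`, `Bx` (with `Bx` of weight two). -/
def PolyOp (k : ℕ) (D : (V × W → ℂ) → (V × W → ℂ)) : Prop :=
  ∃ C : ℕ → ℕ → ℕ → ℂ, ∀ U : Set (V × W), IsOpen U → ∀ f : V × W → ℂ,
    ContDiffOn ℝ (⊤ : ℕ∞) f U → ∀ x ∈ U,
      D f x = ∑ t ∈ Tset k, C t.1 t.2.1 t.2.2 * Fop L1 L2 Bx t f x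

variable {L1 L2 Bx}

lemma polyOp_congr {k : ℕ} {D1 D2 : (V × W → ℂ) → (V × W → ℂ)}
    (h : ∀ f x, D1 f x = D2 f x) (hp : PolyOp L1 L2 Bx k D1) :
    PolyOp L1 L2 Bx k D2 := by
  obtain ⟨C, hC⟩ := hp
  exact ⟨C, fun U hU f hf x hx => (h f x).symm.trans (hC U hU f hf x hx)⟩

lemma polyOp_id : PolyOp L1 L2 Bx 0 (fun f => f) := by
  refine ⟨fun _ _ _ => 1, fun U hU f hf x hx => ?_⟩
  have h0 : Tset 0 = {((0:ℕ), (0:ℕ), (0:ℕ))} := by decide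
  rw [h0, Finset.sum_singleton]
  simp [Fop]

lemma polyOp_smul {k : ℕ} {D : (V × W → ℂ) → (V × W → ℂ)} (a : ℂ)
    (hp : PolyOp L1 L2 Bx k D) : PolyOp L1 L2 Bx k (fun f x => a * D f x) := by
  obtain ⟨C, hC⟩ := hp
  refine ⟨fun i j l => a * C i j l, fun U hU f hf x hx => ?_⟩
  beta_reduce
  rw [hC U hU f hf x hx, Finset.mul_sum]
  exact Finset.sum_congr rfl fun t _ => by ring

lemma polyOp_add {k : ℕ} {D1 D2 : (V × W → ℂ) → (V × W → ℂ)}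
    (h1 : PolyOp L1 L2 Bx k D1) (h2 : PolyOp L1 L2 Bx k D2) :
    PolyOp L1 L2 Bx k (fun f x => D1 f x + D2 f x) := by
  obtain ⟨C1, hC1⟩ := h1
  obtain ⟨C2, hC2⟩ := h2
  refine ⟨fun i j l => C1 i j l + C2 i j l, fun U hU f hf x hx => ?_⟩
  beta_reduce
  rw [hC1 U hU f hf x hx, hC2 U hU f hf x hx, ← Finset.sum_add_distrib]
  exact Finset.sum_congr rfl fun t _ => by ring

variable [FiniteDimensional ℝ V]

/-- Generic lifting lemma: applying an operator `A` to a polynomial operator. -/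
lemma polyOp_apply_op (A : (V × W → ℂ) → (V × W → ℂ)) (hAl : OpLoc A) (hAsum : OpSum A)
    (hs1 : OpSmooth L1) (hs2 : OpSmooth L2) (hsB : OpSmooth Bx)
    (φ : ℕ × ℕ × ℕ → ℕ × ℕ × ℕ) {k k' : ℕ} (hφ : ∀ t ∈ Tset k, φ t ∈ Tset k')
    (hstep : ∀ (U : Set (V × W)), IsOpen U → ∀ f, ContDiffOn ℝ (⊤ : ℕ∞) f U →
      ∀ t ∈ Tset k, ∀ x ∈ U, A (Fop L1 L2 Bx t f) x = Fop L1 L2 Bx (φ t) f x)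
    {D : (V × W → ℂ) → (V × W → ℂ)} (hp : PolyOp L1 L2 Bx k D) :
    PolyOp L1 L2 Bx k' (fun f => A (D f)) := by
  obtain ⟨C, hC⟩ := hp
  obtain ⟨C', hC'⟩ := Tset_reindex k k' φ hφ (fun t => C t.1 t.2.1 t.2.2)
  refine ⟨C', fun U hU f hf x hx => ?_⟩
  have hFs : ∀ t ∈ Tset k, ContDiffOn ℝ (⊤ : ℕ∞) (Fop L1 L2 Bx t f) U := fun t _ =>
    (hs1.iterate t.1) U hU _ ((hs2.iterate t.2.1) U hU _ ((hsB.iterate t.2.2) U hU f hf))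
  calc A (D f) x
      = A (fun y => ∑ t ∈ Tset k, C t.1 t.2.1 t.2.2 * Fop L1 L2 Bx t f y) x :=
        hAl U hU _ _ (fun y hy => hC U hU f hf y hy) x hx
    _ = ∑ t ∈ Tset k, C t.1 t.2.1 t.2.2 * A (Fop L1 L2 Bx t f) x :=
        hAsum U hU _ _ _ hFs x hx
    _ = ∑ t ∈ Tset k, C t.1 t.2.1 t.2.2 * Fop L1 L2 Bx (φ t) f x :=
        Finset.sum_congr rfl fun t ht => by rw [hstep U hU f hf t ht x hx]
    _ = ∑ t ∈ Tset k', C' t.1 t.2.1 t.2.2 * Fop L1 L2 Bx t f x :=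
        (hC' (fun t => Fop L1 L2 Bx t f x)).symm

variable (hl1 : OpLoc L1) (hl2 : OpLoc L2) (hlB : OpLoc Bx)
  (hs1 : OpSmooth L1) (hs2 : OpSmooth L2) (hsB : OpSmooth Bx)
  (hm1 : OpSum L1) (hm2 : OpSum L2) (hmB : OpSum Bx)
  (c21 : OpComm L2 L1) (cB1 : OpComm Bx L1) (cB2 : OpComm Bx L2)

section Steps
include hs1 hs2 hsB

lemma polyOp_L1 (hAl : OpLoc L1) (hAsum : OpSum L1) {k : ℕ}
    {D : (V × W → ℂ) → (V × W → ℂ)} (hp : PolyOp L1 L2 Bx k D) :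
    PolyOp L1 L2 Bx (k+1) (fun f => L1 (D f)) := by
  refine polyOp_apply_op L1 hAl hAsum hs1 hs2 hsB
    (fun t => (t.1 + 1, t.2.1, t.2.2)) (fun t ht => ?_) (fun U hU f hf t ht x hx => ?_) hp
  · simp only [mem_Tset] at ht ⊢; omega
  · show L1 (L1^[t.1] (L2^[t.2.1] (Bx^[t.2.2] f))) x = Fop L1 L2 Bx _ f x
    rw [show Fop L1 L2 Bx (t.1 + 1, t.2.1, t.2.2) f
        = L1^[t.1 + 1] (L2^[t.2.1] (Bx^[t.2.2] f)) from rfl,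
      Function.iterate_succ_apply']

include hl1 c21 in
lemma polyOp_L2 (hAl : OpLoc L2) (hAsum : OpSum L2) {k : ℕ}
    {D : (V × W → ℂ) → (V × W → ℂ)} (hp : PolyOp L1 L2 Bx k D) :
    PolyOp L1 L2 Bx (k+1) (fun f => L2 (D f)) := by
  refine polyOp_apply_op L2 hAl hAsum hs1 hs2 hsB
    (fun t => (t.1, t.2.1 + 1, t.2.2)) (fun t ht => ?_) (fun U hU f hf t ht x hx => ?_) hp
  · simp only [mem_Tset] at ht ⊢; omega
  · show L2 (L1^[t.1] (L2^[t.2.1] (Bx^[t.2.2] f))) x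
      = L1^[t.1] (L2^[t.2.1 + 1] (Bx^[t.2.2] f)) x
    have hg : ContDiffOn ℝ (⊤ : ℕ∞) (L2^[t.2.1] (Bx^[t.2.2] f)) U :=
      (hs2.iterate t.2.1) U hU _ ((hsB.iterate t.2.2) U hU f hf)
    rw [(c21.iterate_right hAl hl1 hs1 t.1) U hU _ hg x hx,
      ← Function.iterate_succ_apply' L2]

include hl1 hl2 hlB cB1 cB2 in
lemma polyOp_B (hAsum : OpSum Bx) {k : ℕ}
    {D : (V × W → ℂ) → (V × W → ℂ)} (hp : PolyOp L1 L2 Bx k D) :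
    PolyOp L1 L2 Bx (k+2) (fun f => Bx (D f)) := by
  refine polyOp_apply_op Bx hlB hAsum hs1 hs2 hsB
    (fun t => (t.1, t.2.1, t.2.2 + 1)) (fun t ht => ?_) (fun U hU f hf t ht x hx => ?_) hp
  · simp only [mem_Tset] at ht ⊢; omega
  · show Bx (L1^[t.1] (L2^[t.2.1] (Bx^[t.2.2] f))) x
      = L1^[t.1] (L2^[t.2.1] (Bx^[t.2.2 + 1] f)) x
    have hBf : ContDiffOn ℝ (⊤ : ℕ∞) (Bx^[t.2.2] f) U := (hsB.iterate t.2.2) U hU f hf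
    have hg : ContDiffOn ℝ (⊤ : ℕ∞) (L2^[t.2.1] (Bx^[t.2.2] f)) U := (hs2.iterate t.2.1) U hU _ hBf
    rw [(cB1.iterate_right hlB hl1 hs1 t.1) U hU _ hg x hx]
    refine ((hl1.iterate t.1) U hU _ _ (fun y hy => ?_) x hx)
    rw [(cB2.iterate_right hlB hl2 hs2 t.2.1) U hU _ hBf y hy,
      ← Function.iterate_succ_apply' Bx]

include hl1 hl2 c21 hm1 hm2 in
lemma polyOp_Lfull (L : (V × W → ℂ) → (V × W → ℂ))
    (hL : ∀ f x, L f x = L1 f x + L2 f x) {k : ℕ}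
    {D : (V × W → ℂ) → (V × W → ℂ)} (hp : PolyOp L1 L2 Bx k D) :
    PolyOp L1 L2 Bx (k+1) (fun f => L (D f)) := by
  refine polyOp_congr (fun f x => ?_)
    (polyOp_add (polyOp_L1 hs1 hs2 hsB hl1 hm1 hp) (polyOp_L2 hl1 hs1 hs2 hsB c21 hl2 hm2 hp))
  exact (hL (D f) x).symm

end Steps

include hl1 hl2 hlB hs1 hs2 hsB hm1 hm2 hmB c21 cB1 cB2 in
/-- The operators `D_{s,k}` are polynomials in `L1`, `L2`, `Bx`. -/
lemma polyOp_Dop (L : (V × W → ℂ) → (V × W → ℂ))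
    (hL : ∀ f x, L f x = L1 f x + L2 f x) (ρ ρ₁ qc p₂c : ℂ) :
    ∀ (k : ℕ) (s : ℂ), PolyOp L1 L2 Bx k (Dop L L2 Bx ρ ρ₁ qc p₂c k s) := by
  intro k
  induction k using Nat.strong_induction_on with
  | _ k IH =>
    match k with
    | 0 =>
      intro s
      exact polyOp_congr (fun f x => rfl) polyOp_id
    | 1 =>
      intro s
      refine polyOp_congr (fun f x => ?_)
        (polyOp_add
          (polyOp_smul ((8*s*(4*s + 2*ρ - 2)*(2*s + qc - 1))⁻¹ * (4*s + 2*ρ - 2))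
            (polyOp_L2 hl1 hs1 hs2 hsB c21 hl2 hm2 polyOp_id))
          (polyOp_smul (-((8*s*(4*s + 2*ρ - 2)*(2*s + qc - 1))⁻¹ * p₂c))
            (polyOp_Lfull hl1 hl2 hs1 hs2 hsB hm1 hm2 c21 L hL polyOp_id)))
      show _ = Dop L L2 Bx ρ ρ₁ qc p₂c 1 s f x
      simp only [Dop]
      ring
    | (k+2) =>
      intro s
      have h1 := IH (k+1) (by omega) s
      have h0 := IH k (by omega) (s-1)
      have A1 := polyOp_smul
        ((8*(s - ((k:ℂ)+1))*(4*s + 2*ρ - 2)*(2*s + qc - 2*((k:ℂ)+1) - 1))⁻¹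
          * (4*s + 2*ρ - 2))
        (polyOp_L2 hl1 hs1 hs2 hsB c21 hl2 hm2 h1)
      have A2 := polyOp_smul
        (-((8*(s - ((k:ℂ)+1))*(4*s + 2*ρ - 2)*(2*s + qc - 2*((k:ℂ)+1) - 1))⁻¹
          * (4*((k:ℂ)+1) + p₂c)))
        (polyOp_Lfull hl1 hl2 hs1 hs2 hsB hm1 hm2 c21 L hL h1)
      have A3 := polyOp_smul
        (-((8*(s - ((k:ℂ)+1))*(4*s + 2*ρ - 2)*(2*s + qc - 2*((k:ℂ)+1) - 1))⁻¹
          * (2*((k:ℂ)+1)*(2*((k:ℂ)+1) + p₂c - 2)*(4*s + 2*ρ₁ - 4*((k:ℂ)+1) - 2)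
            / (2*(4*s*(4*s + 2*ρ - 2))*(2*s + qc - 1)*(4*s + 2*ρ - 4)))))
        (polyOp_Lfull hl1 hl2 hs1 hs2 hsB hm1 hm2 c21 L hL
          (polyOp_Lfull hl1 hl2 hs1 hs2 hsB hm1 hm2 c21 L hL h0))
      have A4 := polyOp_smul (-((8*(s - ((k:ℂ)+1))*(4*s + 2*ρ - 2)*(2*s + qc - 2*((k:ℂ)+1) - 1))⁻¹ * (2*((k:ℂ)+1)*(2*((k:ℂ)+1) + p₂c - 2)*(4*s + 2*ρ₁ - 4*((k:ℂ)+1) - 2) / (2*(4*s*(4*s + 2*ρ - 2))*(2*s + qc - 1)*(4*s + 2*ρ - 4))) * (4*(4*s + 2*ρ - 2)^2)))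
        (polyOp_B hl1 hl2 hlB hs1 hs2 hsB cB1 cB2 hmB h0)
      refine polyOp_congr (fun f x => ?_)
        (polyOp_add (polyOp_add A1 A2) (polyOp_add A3 A4))
      show _ = Dop L L2 Bx ρ ρ₁ qc p₂c (k+2) s f x
      simp only [Dop]
      ring

end PolyDev

/-- if `D_{s,k}` is defined then there are constants `C_{s,k}(i,j,ℓ)`,
indexed by triples with `i+j+2ℓ = k`, such that
`D_{s,k} f = ∑_{i+j+2ℓ=k} C_{s,k}(i,j,ℓ) Δ₁^i Δ₂^j □^ℓ f`
for every smooth function `f` on an open subset of `𝔳 × 𝔷`. -/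
theorem DopIsPolynomial {V W : Type*} [NormedAddCommGroup V] [InnerProductSpace ℝ V]
    [NormedAddCommGroup W] [InnerProductSpace ℝ W]
    [FiniteDimensional ℝ V] [FiniteDimensional ℝ W]
    (p p₁ p₂ q : ℕ) (hp : Module.finrank ℝ V = p) (hq : Module.finrank ℝ W = q)
    (V₁ : Submodule ℝ V) (hp₁ : Module.finrank ℝ V₁ = p₁)
    (hp₂ : Module.finrank ℝ V₁ᗮ = p₂)
    (br : V →ₗ[ℝ] V →ₗ[ℝ] W) (hbr : ∀ X : V, br X X = 0)
    (hbr12 : ∀ X ∈ V₁, ∀ Y ∈ V₁ᗮ, br X Y = 0)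
    (J : W →ₗ[ℝ] V →ₗ[ℝ] V)
    (hJ : ∀ (z : W) (X Y : V), ⟪J z X, Y⟫_ℝ = ⟪z, br X Y⟫_ℝ)
    (hH : ∀ (z : W) (X : V), J z (J z X) = (-16 * ‖z‖^2) • X)
    (S : OrthonormalBasis (Fin p) ℝ V)
    (hS : ∀ j : Fin p, ((j : ℕ) < p₁ → S j ∈ V₁) ∧ (p₁ ≤ (j : ℕ) → S j ∈ V₁ᗮ))
    (T : OrthonormalBasis (Fin q) ℝ W)
    (s : ℂ) (k : ℕ) (hdef : Ddef (rhoC p q) (q : ℂ) k s) :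
    ∃ C : ℕ → ℕ → ℕ → ℂ,
      ∀ (U : Set (V × W)), IsOpen U → ∀ f : V × W → ℂ, ContDiffOn ℝ (⊤ : ℕ∞) f U →
        ∀ x ∈ U,
          Dop (subLap br Finset.univ (fun j => S j))
              (subLap br (Finset.univ.filter fun j : Fin p => p₁ ≤ (j : ℕ)) (fun j => S j))
              (boxLap Finset.univ (fun j => T j))
              (rhoC p q) (rho1C p₁ q) (q : ℂ) (p₂ : ℂ) k s f x
            = ∑ t ∈ ((Finset.range (k+1) ×ˢ Finset.range (k+1) ×ˢ Finset.range (k+1)).filter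
                  fun t => t.1 + t.2.1 + 2*t.2.2 = k),
                C t.1 t.2.1 t.2.2 *
                  ((subLap br (Finset.univ.filter fun j : Fin p => (j : ℕ) < p₁)
                      (fun j => S j))^[t.1]
                    ((subLap br (Finset.univ.filter fun j : Fin p => p₁ ≤ (j : ℕ))
                        (fun j => S j))^[t.2.1]
                      ((boxLap Finset.univ (fun j => T j))^[t.2.2] f))) x := by
  classical
  have hskew : ∀ X Y : V, br X Y = - br Y X := by
    intro X Y
    have h := hbr (X + Y)
    simp only [map_add, LinearMap.add_apply, hbr, zero_add, add_zero] at h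
    exact eq_neg_of_add_eq_zero_right h
  have hcond : ∀ i ∈ (Finset.univ.filter fun j : Fin p => p₁ ≤ (j : ℕ)),
      ∀ j ∈ (Finset.univ.filter fun j : Fin p => (j : ℕ) < p₁),
      br ((fun j => (S j : V)) i) ((fun j => (S j : V)) j) = 0 ∧
      br ((fun j => (S j : V)) j) ((fun j => (S j : V)) i) = 0 := by
    intro i hi j hj
    simp only [Finset.mem_filter, Finset.mem_univ, true_and] at hi hj
    have h1 : br (S j) (S i) = 0 := hbr12 (S j) ((hS j).1 hj) (S i) ((hS i).2 hi)
    exact ⟨by rw [hskew, h1, neg_zero], h1⟩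
  have c21 : OpComm
      (subLap br (Finset.univ.filter fun j : Fin p => p₁ ≤ (j : ℕ)) (fun j => (S j : V)))
      (subLap br (Finset.univ.filter fun j : Fin p => (j : ℕ) < p₁) (fun j => (S j : V))) :=
    opComm_subLap_subLap _ _ _ _ hcond
  have cB1 : OpComm (boxLap (V := V) Finset.univ (fun j => (T j : W)))
      (subLap br (Finset.univ.filter fun j : Fin p => (j : ℕ) < p₁) (fun j => (S j : V))) :=
    opComm_boxLap_subLap _ _ _ _
  have cB2 : OpComm (boxLap (V := V) Finset.univ (fun j => (T j : W)))
      (subLap br (Finset.univ.filter fun j : Fin p => p₁ ≤ (j : ℕ)) (fun j => (S j : V))) :=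
    opComm_boxLap_subLap _ _ _ _
  have hfilter : (Finset.univ.filter fun j : Fin p => ¬ (j : ℕ) < p₁)
      = (Finset.univ.filter fun j : Fin p => p₁ ≤ (j : ℕ)) := by
    ext j; simp [not_lt]
  have hL : ∀ (f : V × W → ℂ) (x : V × W),
      subLap br Finset.univ (fun j => (S j : V)) f x
        = subLap br (Finset.univ.filter fun j : Fin p => (j : ℕ) < p₁) (fun j => (S j : V)) f x
          + subLap br (Finset.univ.filter fun j : Fin p => p₁ ≤ (j : ℕ))
              (fun j => (S j : V)) f x := by
    intro f x
    simp only [subLap]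
    rw [← Finset.sum_filter_add_sum_filter_not Finset.univ
      (fun j : Fin p => (j : ℕ) < p₁), hfilter]
  exact polyOp_Dop (opLoc_subLap _ _) (opLoc_subLap _ _) (opLoc_boxLap _ _)
    (opSmooth_subLap _ _) (opSmooth_subLap _ _) (opSmooth_boxLap _ _)
    (opSum_subLap _ _) (opSum_subLap _ _) (opSum_boxLap _ _)
    c21 cB1 cB2 _ hL (rhoC p q) (rho1C p₁ q) (q : ℂ) (p₂ : ℂ) k s
end
end
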